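/- Assume (A1)(a). For any nonempty finite set D ⊆ S there exists a pair (λ_D, ψ_D) with λ_D ≥ 0 and ψ_D : S → [0,∞) nonzero and vanishing outside D, satisfying λ_D ψ_D(i) = min_{u∈𝕌(i)} [ e^{c(i,u)} Σ_{j∈S} ψ_D(j) P(j|i,u) ] for all i ∈ D. Moreover, with ρ_D := log λ_D (interpreted as −∞ if λ_D = 0), one has ρ_D ≤ inf_{ζ∈𝔘} limsup_{T→∞} (1/T) log E_i^ζ[ exp(Σ_{t=0}^{T−1} c(X_t,ζ_t)) ] for every i ∈ S with ψ_D(i) ≠ 0. -/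

import Mathlib

/-!
Discrete-time controlled Markov chains on the countable state space `S = ℕ`,
with Borel action space `U`, admissible action sets `𝕌 i ⊆ U`, controlled
transition probabilities `P i u j = P(j | i, u)` (valued in `ℝ≥0∞`) and running
cost `c i u = c(i,u)`.

Since admissible policies are deterministic measurable functions of the
history, and the actions appearing in a history are themselves determined by
the past states, an admissible policy is faithfully represented by a family of
maps of state-prefixes `ζ t : (Fin (t+1) → ℕ) → U`; measurability in the
history is automatic because state prefixes form a countable discrete space.
The trajectory law `P_i^ζ` is uniquely determined by its cylinder
probabilities, which are given explicitly by `pathWeight`; accordingly,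
expectations of path functionals are given by explicit (countable) sums.
-/

open Filter Set
open scoped ENNReal NNReal Topology Classical

namespace RSDT

variable {U : Type*}

/-- The action chosen at time `t` under policy `ζ` along the state path `x`. -/
def act (ζ : ∀ t : ℕ, (Fin (t + 1) → ℕ) → U) (x : ℕ → ℕ) (t : ℕ) : U :=
  ζ t fun s : Fin (t + 1) => x s.val

/-- Admissibility of a policy: all chosen actions lie in the admissible sets. -/
def IsAdmissible (𝕌 : ℕ → Set U) (ζ : ∀ t : ℕ, (Fin (t + 1) → ℕ) → U) : Prop :=
  ∀ (t : ℕ) (h : Fin (t + 1) → ℕ), ζ t h ∈ 𝕌 (h (Fin.last t))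

/-- The stationary Markov policy attached to `v : S → U`. -/
def smPolicy (v : ℕ → U) : ∀ t : ℕ, (Fin (t + 1) → ℕ) → U :=
  fun t h => v (h (Fin.last t))

/-- The (time-dependent) Markov policy attached to `v : ℕ → S → U`. -/
def mPolicy (v : ℕ → ℕ → U) : ∀ t : ℕ, (Fin (t + 1) → ℕ) → U :=
  fun t h => v t (h (Fin.last t))

/-- `v : S → U` is a stationary Markov selector for the action sets `𝕌`. -/
def IsSM (𝕌 : ℕ → Set U) (v : ℕ → U) : Prop := ∀ i, v i ∈ 𝕌 i

/-- Probability, under the trajectory law `P_i^ζ`, that the chain follows the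
path `x` during its first `T` steps. -/
noncomputable def pathWeight (P : ℕ → U → ℕ → ℝ≥0∞)
    (ζ : ∀ t : ℕ, (Fin (t + 1) → ℕ) → U) (i T : ℕ) (x : ℕ → ℕ) : ℝ≥0∞ :=
  (if x 0 = i then 1 else 0) * ∏ t ∈ Finset.range T, P (x t) (act ζ x t) (x (t + 1))

/-- Extension of a finite path to an infinite one (freezing the last state). -/
def extN (T : ℕ) (x : Fin (T + 1) → ℕ) : ℕ → ℕ :=
  fun n => x ⟨min n T, Nat.lt_succ_of_le (min_le_right n T)⟩

/-- `E_i^ζ [F(X_0, …, X_T)]` for a nonnegative functional `F` of the first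
`T + 1` states. -/
noncomputable def pathExp (P : ℕ → U → ℕ → ℝ≥0∞)
    (ζ : ∀ t : ℕ, (Fin (t + 1) → ℕ) → U) (i T : ℕ) (F : (ℕ → ℕ) → ℝ≥0∞) : ℝ≥0∞ :=
  ∑' x : Fin (T + 1) → ℕ, pathWeight P ζ i T (extN T x) * F (extN T x)

/-- The ergodic risk-sensitive cost
`𝓔_i(c,ζ) = limsup_{T→∞} (1/T) log E_i^ζ [exp (∑_{t<T} c(X_t, ζ_t))]`. -/
noncomputable def ergCost (P : ℕ → U → ℕ → ℝ≥0∞) (c : ℕ → U → ℝ)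
    (ζ : ∀ t : ℕ, (Fin (t + 1) → ℕ) → U) (i : ℕ) : EReal :=
  Filter.limsup
    (fun T : ℕ => (((T : ℝ)⁻¹ : ℝ) : EReal) *
      ENNReal.log (pathExp P ζ i T fun x =>
        ENNReal.ofReal (Real.exp (∑ t ∈ Finset.range T, c (x t) (act ζ x t)))))
    Filter.atTop

/-- The optimal value `λ* = inf_{i ∈ S} inf_{ζ ∈ 𝔘} 𝓔_i(c,ζ)`. -/
noncomputable def lamStar (P : ℕ → U → ℕ → ℝ≥0∞) (c : ℕ → U → ℝ) (𝕌 : ℕ → Set U) : EReal :=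
  ⨅ (i : ℕ) (ζ : {ζ : ∀ t : ℕ, (Fin (t + 1) → ℕ) → U // IsAdmissible 𝕌 ζ}),
    ergCost P c ζ.1 i

/-- `E_i^ζ [ G(τ̆(B), X) ; τ̆(B) < ∞ ]`, where `τ̆(B) = inf {t > 0 : X_t ∈ B}`
is the first hitting time of `B`. -/
noncomputable def hitExp (P : ℕ → U → ℕ → ℝ≥0∞)
    (ζ : ∀ t : ℕ, (Fin (t + 1) → ℕ) → U) (i : ℕ) (B : Set ℕ)
    (G : ℕ → (ℕ → ℕ) → ℝ≥0∞) : ℝ≥0∞ :=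
  ∑' (m : ℕ) (x : Fin (m + 1 + 1) → ℕ),
    if extN (m + 1) x (m + 1) ∈ B ∧ ∀ t, 0 < t → t < m + 1 → extN (m + 1) x t ∉ B then
      pathWeight P ζ i (m + 1) (extN (m + 1) x) * G (m + 1) (extN (m + 1) x)
    else 0

/-- `P_i^ζ (τ̆(B) < ∞)`. -/
noncomputable def hitProb (P : ℕ → U → ℕ → ℝ≥0∞)
    (ζ : ∀ t : ℕ, (Fin (t + 1) → ℕ) → U) (i : ℕ) (B : Set ℕ) : ℝ≥0∞ :=
  hitExp P ζ i B fun _ _ => 1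

/-- Recurrence under a stationary Markov policy: from every state, every state
is hit with probability one. -/
def Recurrent (P : ℕ → U → ℕ → ℝ≥0∞) (v : ℕ → U) : Prop :=
  ∀ i j : ℕ, hitProb P (smPolicy v) i {j} = 1

/-- Irreducibility under a stationary Markov policy. -/
def Irreducible (P : ℕ → U → ℕ → ℝ≥0∞) (v : ℕ → U) : Prop :=
  ∀ i j : ℕ, i ≠ j → ∃ n : ℕ, 0 < n ∧ ∃ x : ℕ → ℕ, x 0 = i ∧ x n = j ∧
    ∀ t < n, 0 < P (x t) (v (x t)) (x (t + 1))

/-- A function on the state space is norm-like (inf-compact) if all its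
sublevel sets are finite (or empty). -/
def NormLike (g : ℕ → ℝ) : Prop := ∀ κ : ℝ, {i | g i ≤ κ}.Finite

/-- `max_{u ∈ 𝕌(i)} c(i, u)`. -/
noncomputable def maxCost (c : ℕ → U → ℝ) (𝕌 : ℕ → Set U) (i : ℕ) : ℝ :=
  sSup ((fun u => c i u) '' 𝕌 i)

/-- `‖c‖_∞ = sup_{i ∈ S} sup_{u ∈ 𝕌(i)} c(i,u)`. -/
noncomputable def supCost (c : ℕ → U → ℝ) (𝕌 : ℕ → Set U) : ℝ :=
  sSup {r : ℝ | ∃ i, ∃ u ∈ 𝕌 i, c i u = r}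

/-- The one-step minimized operator
`ψ ↦ min_{u ∈ 𝕌(i)} e^{c(i,u)} ∑_{j ∈ S} ψ(j) P(j|i,u)`. -/
noncomputable def minOp (P : ℕ → U → ℕ → ℝ≥0∞) (c : ℕ → U → ℝ)
    (𝕌 : ℕ → Set U) (ψ : ℕ → ℝ≥0∞) (i : ℕ) : ℝ≥0∞ :=
  ⨅ u : 𝕌 i, ENNReal.ofReal (Real.exp (c i u.1)) * ∑' j, ψ j * P i u.1 j

/-- Structural standing assumptions on the discrete-time control model. -/
structure Model [TopologicalSpace U] [MeasurableSpace U]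
    (P : ℕ → U → ℕ → ℝ≥0∞) (c : ℕ → U → ℝ) (𝕌 : ℕ → Set U) : Prop where
  nonempty : ∀ i, (𝕌 i).Nonempty
  compact : ∀ i, IsCompact (𝕌 i)
  prob : ∀ i, ∀ u ∈ 𝕌 i, ∑' j, P i u j = 1
  measP : ∀ i j, Measurable fun u => P i u j

/-- Assumption (A1)(a): continuity in the action variable. -/
structure A1a [TopologicalSpace U] (P : ℕ → U → ℕ → ℝ≥0∞) (c : ℕ → U → ℝ)
    (𝕌 : ℕ → Set U) : Prop where
  cCont : ∀ i, ContinuousOn (fun u => c i u) (𝕌 i)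
  PCont : ∀ (i : ℕ) (f : ℕ → ℝ), (∃ M, ∀ j, |f j| ≤ M) →
    ContinuousOn (fun u => ∑' j, f j * (P i u j).toReal) (𝕌 i)

/-- Assumption (A1)(b): from the reference state `i₀` every other state is
reached in one step with positive probability. -/
def A1b (P : ℕ → U → ℕ → ℝ≥0∞) (𝕌 : ℕ → Set U) (i₀ : ℕ) : Prop :=
  ∀ j ≠ i₀, ∀ u ∈ 𝕌 i₀, 0 < P i₀ u j

/-- Foster–Lyapunov condition (A2)(a). -/
structure A2a (P : ℕ → U → ℕ → ℝ≥0∞) (c : ℕ → U → ℝ) (𝕌 : ℕ → Set U)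
    (V : ℕ → ℝ≥0∞) (K : Finset ℕ) (Chat : ℝ≥0∞) (β : ℝ) : Prop where
  betaPos : 0 < β
  betaLtOne : β < 1
  ChatPos : 0 < Chat
  ChatFin : Chat ≠ ∞
  Vone : ∀ i, 1 ≤ V i
  Vfin : ∀ i, V i ≠ ∞
  lyap : ∀ i, ∀ u ∈ 𝕌 i,
    ∑' j, V j * P i u j ≤ ENNReal.ofReal (1 - β) * V i + (if i ∈ K then Chat else 0)
  cBdd : ∃ M : ℝ, M < Real.log (1 / (1 - β)) ∧ ∀ i, ∀ u ∈ 𝕌 i, c i u ≤ M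

/-- Foster–Lyapunov condition (A2)(b). -/
structure A2b (P : ℕ → U → ℕ → ℝ≥0∞) (c : ℕ → U → ℝ) (𝕌 : ℕ → Set U)
    (V : ℕ → ℝ≥0∞) (K : Finset ℕ) (Chat : ℝ≥0∞) (ℓ : ℕ → ℝ) : Prop where
  ChatPos : 0 < Chat
  ChatFin : Chat ≠ ∞
  Vone : ∀ i, 1 ≤ V i
  Vfin : ∀ i, V i ≠ ∞
  ellNonneg : ∀ i, 0 ≤ ℓ i
  ellNormLike : NormLike ℓ
  lyap : ∀ i, ∀ u ∈ 𝕌 i,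
    ∑' j, V j * P i u j ≤ (if i ∈ K then Chat else 0) + ENNReal.ofReal (Real.exp (-ℓ i)) * V i
  gap : NormLike fun i => ℓ i - maxCost c 𝕌 i

/-- Assumption (A2): irreducibility under every stationary Markov policy plus
one of the two Foster–Lyapunov drift conditions. -/
def A2 (P : ℕ → U → ℕ → ℝ≥0∞) (c : ℕ → U → ℝ) (𝕌 : ℕ → Set U) : Prop :=
  (∀ v : ℕ → U, IsSM 𝕌 v → Irreducible P v) ∧
  ∃ (V : ℕ → ℝ≥0∞) (K : Finset ℕ) (Chat : ℝ≥0∞),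
    (∃ β : ℝ, A2a P c 𝕌 V K Chat β) ∨ ∃ ℓ : ℕ → ℝ, A2b P c 𝕌 V K Chat ℓ

end RSDT

namespace RSDT

section Aux

variable {U : Type*}

/-! ### The real-valued one-step operator -/

/-- Real-valued one-step value of action `u` at state `i` against `f` supported on `D`. -/
noncomputable def rval (P : ℕ → U → ℕ → ℝ≥0∞) (c : ℕ → U → ℝ) (D : Finset ℕ)
    (f : ℕ → ℝ) (i : ℕ) (u : U) : ℝ :=
  Real.exp (c i u) * ∑ j ∈ D, f j * (P i u j).toReal

/-- Real-valued minimized one-step operator. -/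
noncomputable def gop (P : ℕ → U → ℕ → ℝ≥0∞) (c : ℕ → U → ℝ) (𝕌 : ℕ → Set U)
    (D : Finset ℕ) (f : ℕ → ℝ) (i : ℕ) : ℝ :=
  ⨅ u : 𝕌 i, rval P c D f i u.1

variable [TopologicalSpace U] [MeasurableSpace U]
variable {P : ℕ → U → ℕ → ℝ≥0∞} {c : ℕ → U → ℝ} {𝕌 : ℕ → Set U} {D : Finset ℕ}

lemma P_le_one (hM : Model P c 𝕌) {i : ℕ} {u : U} (hu : u ∈ 𝕌 i) (j : ℕ) :
    P i u j ≤ 1 := by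
  rw [← hM.prob i u hu]; exact ENNReal.le_tsum j

lemma P_toReal_le_one (hM : Model P c 𝕌) {i : ℕ} {u : U} (hu : u ∈ 𝕌 i) (j : ℕ) :
    (P i u j).toReal ≤ 1 := by
  have := P_le_one hM hu j
  calc (P i u j).toReal ≤ (1 : ℝ≥0∞).toReal := ENNReal.toReal_mono (by simp) this
  _ = 1 := by simp

/-- A state-wise upper bound on `exp (c i ·)` over `𝕌 i`. -/
lemma exists_expBound (hM : Model P c 𝕌) (hA1a : A1a P c 𝕌) :
    ∃ E : ℕ → ℝ, ∀ i, 1 ≤ E i ∧ ∀ u ∈ 𝕌 i, Real.exp (c i u) ≤ E i := by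
  have h : ∀ i : ℕ, ∃ Ei : ℝ, 1 ≤ Ei ∧ ∀ u ∈ 𝕌 i, Real.exp (c i u) ≤ Ei := by
    intro i
    obtain ⟨u₀, hu₀, hmax⟩ := (hM.compact i).exists_isMaxOn (hM.nonempty i) (hA1a.cCont i)
    refine ⟨max 1 (Real.exp (c i u₀)), le_max_left _ _, fun u hu => ?_⟩
    exact le_trans (Real.exp_le_exp.2 (hmax hu)) (le_max_right _ _)
  choose E hE using h
  exact ⟨E, hE⟩

section gopBasic

variable {E : ℕ → ℝ} (hE : ∀ i, 1 ≤ E i ∧ ∀ u ∈ 𝕌 i, Real.exp (c i u) ≤ E i)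
include hE

lemma rval_abs_le (hM : Model P c 𝕌) {f : ℕ → ℝ} {i : ℕ} {u : U} (hu : u ∈ 𝕌 i) :
    |rval P c D f i u| ≤ E i * ∑ j ∈ D, |f j| := by
  have h1 : |rval P c D f i u| = Real.exp (c i u) * |∑ j ∈ D, f j * (P i u j).toReal| := by
    rw [rval, abs_mul, abs_of_pos (Real.exp_pos _)]
  rw [h1]
  have h2 : |∑ j ∈ D, f j * (P i u j).toReal| ≤ ∑ j ∈ D, |f j| := by
    refine le_trans (Finset.abs_sum_le_sum_abs _ _) (Finset.sum_le_sum fun j _ => ?_)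
    rw [abs_mul, abs_of_nonneg ENNReal.toReal_nonneg]
    calc |f j| * (P i u j).toReal ≤ |f j| * 1 :=
          mul_le_mul_of_nonneg_left (P_toReal_le_one hM hu j) (abs_nonneg _)
    _ = |f j| := mul_one _
  have h3 : Real.exp (c i u) ≤ E i := (hE i).2 u hu
  have h4 : (0:ℝ) ≤ ∑ j ∈ D, |f j| := Finset.sum_nonneg fun j _ => abs_nonneg _
  calc Real.exp (c i u) * |∑ j ∈ D, f j * (P i u j).toReal|
      ≤ E i * ∑ j ∈ D, |f j| := by
        apply mul_le_mul h3 h2 (abs_nonneg _) (le_trans (by norm_num) (hE i).1)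

lemma rval_bddBelow (hM : Model P c 𝕌) (f : ℕ → ℝ) (i : ℕ) :
    BddBelow (Set.range fun u : 𝕌 i => rval P c D f i u.1) := by
  refine ⟨-(E i * ∑ j ∈ D, |f j|), ?_⟩
  rintro _ ⟨u, rfl⟩
  have := rval_abs_le (D := D) hE hM (f := f) u.2
  exact neg_le_of_abs_le this

lemma rval_comp (hM : Model P c 𝕌) {f f' : ℕ → ℝ} {i : ℕ} {u : U} (hu : u ∈ 𝕌 i) :
    rval P c D f i u ≤ rval P c D f' i u + E i * ∑ j ∈ D, |f j - f' j| := by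
  have key : rval P c D f i u - rval P c D f' i u
      = Real.exp (c i u) * ∑ j ∈ D, (f j - f' j) * (P i u j).toReal := by
    rw [rval, rval, ← mul_sub, ← Finset.sum_sub_distrib]
    congr 1
    exact Finset.sum_congr rfl fun j _ => by ring
  have h2 : Real.exp (c i u) * ∑ j ∈ D, (f j - f' j) * (P i u j).toReal
      ≤ E i * ∑ j ∈ D, |f j - f' j| := by
    have habs : ∑ j ∈ D, (f j - f' j) * (P i u j).toReal ≤ ∑ j ∈ D, |f j - f' j| := by
      refine Finset.sum_le_sum fun j _ => ?_
      calc (f j - f' j) * (P i u j).toReal ≤ |f j - f' j| * (P i u j).toReal :=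
            mul_le_mul_of_nonneg_right (le_abs_self _) ENNReal.toReal_nonneg
      _ ≤ |f j - f' j| * 1 :=
            mul_le_mul_of_nonneg_left (P_toReal_le_one hM hu j) (abs_nonneg _)
      _ = |f j - f' j| := mul_one _
    rcases le_or_gt (∑ j ∈ D, (f j - f' j) * (P i u j).toReal) 0 with h | h
    · have : (0:ℝ) ≤ E i * ∑ j ∈ D, |f j - f' j| :=
        mul_nonneg (le_trans (by norm_num) (hE i).1)
          (Finset.sum_nonneg fun j _ => abs_nonneg _)
      nlinarith [Real.exp_pos (c i u)]
    · calc Real.exp (c i u) * ∑ j ∈ D, (f j - f' j) * (P i u j).toReal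
          ≤ E i * ∑ j ∈ D, (f j - f' j) * (P i u j).toReal :=
            mul_le_mul_of_nonneg_right ((hE i).2 u hu) (le_of_lt h)
      _ ≤ E i * ∑ j ∈ D, |f j - f' j| :=
            mul_le_mul_of_nonneg_left habs (le_trans (by norm_num) (hE i).1)
  linarith

lemma gop_comp (hM : Model P c 𝕌) (f f' : ℕ → ℝ) (i : ℕ) :
    gop P c 𝕌 D f i ≤ gop P c 𝕌 D f' i + E i * ∑ j ∈ D, |f j - f' j| := by
  have : Nonempty (𝕌 i) := (hM.nonempty i).to_subtype
  have h1 : ∀ u : 𝕌 i, gop P c 𝕌 D f i - E i * ∑ j ∈ D, |f j - f' j| ≤ rval P c D f' i u.1 := by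
    intro u
    have h2 := ciInf_le (rval_bddBelow (D := D) hE hM f i) u
    have h3 := rval_comp (D := D) hE hM (f := f) (f' := f') u.2
    simp only [gop] at *
    linarith
  have := le_ciInf h1
  simp only [gop] at *
  linarith

lemma abs_gop_sub_le (hM : Model P c 𝕌) (f f' : ℕ → ℝ) (i : ℕ) :
    |gop P c 𝕌 D f i - gop P c 𝕌 D f' i| ≤ E i * ∑ j ∈ D, |f j - f' j| := by
  rw [abs_le]
  constructor
  · have := gop_comp (D := D) hE hM f' f i
    have hsym : ∑ j ∈ D, |f' j - f j| = ∑ j ∈ D, |f j - f' j| :=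
      Finset.sum_congr rfl fun j _ => abs_sub_comm _ _
    rw [hsym] at this; linarith
  · have := gop_comp (D := D) hE hM f f' i
    linarith

lemma gop_continuous (hM : Model P c 𝕌) (i : ℕ) :
    Continuous fun f : ℕ → ℝ => gop P c 𝕌 D f i := by
  rw [continuous_iff_continuousAt]
  intro f₀
  have hd : Continuous fun f : ℕ → ℝ => ∑ j ∈ D, |f j - f₀ j| := by
    refine continuous_finset_sum _ fun j _ => ?_
    exact ((continuous_apply j).sub continuous_const).abs
  have hd0 : Filter.Tendsto (fun f : ℕ → ℝ => ∑ j ∈ D, |f j - f₀ j|) (𝓝 f₀) (𝓝 0) := by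
    have := hd.tendsto f₀
    simpa using this
  have hE1 : (0:ℝ) ≤ E i := le_trans (by norm_num) (hE i).1
  show Filter.Tendsto (fun f : ℕ → ℝ => gop P c 𝕌 D f i) (𝓝 f₀) (𝓝 (gop P c 𝕌 D f₀ i))
  refine tendsto_of_tendsto_of_tendsto_of_le_of_le
    (g := fun f => gop P c 𝕌 D f₀ i - E i * ∑ j ∈ D, |f j - f₀ j|)
    (h := fun f => gop P c 𝕌 D f₀ i + E i * ∑ j ∈ D, |f j - f₀ j|) ?_ ?_ ?_ ?_
  · have : Filter.Tendsto (fun f : ℕ → ℝ => gop P c 𝕌 D f₀ i - E i * ∑ j ∈ D, |f j - f₀ j|)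
        (𝓝 f₀) (𝓝 (gop P c 𝕌 D f₀ i - E i * 0)) :=
      (tendsto_const_nhds.sub (hd0.const_mul _))
    simpa using this
  · have : Filter.Tendsto (fun f : ℕ → ℝ => gop P c 𝕌 D f₀ i + E i * ∑ j ∈ D, |f j - f₀ j|)
        (𝓝 f₀) (𝓝 (gop P c 𝕌 D f₀ i + E i * 0)) :=
      (tendsto_const_nhds.add (hd0.const_mul _))
    simpa using this
  · intro f
    dsimp only
    have := abs_gop_sub_le (D := D) hE hM f₀ f i
    have hsym : ∑ j ∈ D, |f₀ j - f j| = ∑ j ∈ D, |f j - f₀ j| :=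
      Finset.sum_congr rfl fun j _ => abs_sub_comm _ _
    rw [hsym] at this
    have := abs_le.1 this
    linarith [this.1, this.2]
  · intro f
    dsimp only
    have := abs_gop_sub_le (D := D) hE hM f f₀ i
    have := abs_le.1 this
    linarith [this.1, this.2]

lemma gop_mono (hM : Model P c 𝕌) {f f' : ℕ → ℝ} (h : ∀ j ∈ D, f j ≤ f' j) (i : ℕ) :
    gop P c 𝕌 D f i ≤ gop P c 𝕌 D f' i := by
  have : Nonempty (𝕌 i) := (hM.nonempty i).to_subtype
  refine ciInf_mono (rval_bddBelow (D := D) hE hM f i) fun u => ?_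
  refine mul_le_mul_of_nonneg_left (Finset.sum_le_sum fun j hj => ?_) (Real.exp_pos _).le
  exact mul_le_mul_of_nonneg_right (h j hj) ENNReal.toReal_nonneg

omit hE in
lemma gop_nonneg (hM : Model P c 𝕌) {f : ℕ → ℝ} (hf : ∀ j, 0 ≤ f j) (i : ℕ) :
    0 ≤ gop P c 𝕌 D f i := by
  have : Nonempty (𝕌 i) := (hM.nonempty i).to_subtype
  refine le_ciInf fun u => mul_nonneg (Real.exp_pos _).le ?_
  exact Finset.sum_nonneg fun j _ => mul_nonneg (hf j) ENNReal.toReal_nonneg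

omit hE in
lemma gop_smul (hM : Model P c 𝕌) {a : ℝ} (ha : 0 ≤ a) (f : ℕ → ℝ) (i : ℕ) :
    gop P c 𝕌 D (fun j => a * f j) i = a * gop P c 𝕌 D f i := by
  have : Nonempty (𝕌 i) := (hM.nonempty i).to_subtype
  rw [gop, gop, Real.mul_iInf_of_nonneg ha]
  refine iInf_congr fun u => ?_
  have h : ∑ j ∈ D, (a * f j) * (P i u.1 j).toReal = a * ∑ j ∈ D, f j * (P i u.1 j).toReal := by
    rw [Finset.mul_sum]; exact Finset.sum_congr rfl fun j _ => by ring
  rw [rval, rval, h]; ring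

lemma gop_le_E (hM : Model P c 𝕌) {f : ℕ → ℝ} (hf : ∀ j, 0 ≤ f j)
    (hsum : ∑ j ∈ D, f j = 1) (i : ℕ) : gop P c 𝕌 D f i ≤ E i := by
  have : Nonempty (𝕌 i) := (hM.nonempty i).to_subtype
  obtain ⟨u₀, hu₀⟩ := hM.nonempty i
  refine le_trans (ciInf_le (rval_bddBelow (D := D) hE hM f i) ⟨u₀, hu₀⟩) ?_
  have h1 : ∑ j ∈ D, f j * (P i u₀ j).toReal ≤ 1 := by
    rw [← hsum]
    exact Finset.sum_le_sum fun j hj => by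
      calc f j * (P i u₀ j).toReal ≤ f j * 1 :=
            mul_le_mul_of_nonneg_left (P_toReal_le_one hM hu₀ j) (hf j)
      _ = f j := mul_one _
  have h2 : (0:ℝ) ≤ ∑ j ∈ D, f j * (P i u₀ j).toReal :=
    Finset.sum_nonneg fun j _ => mul_nonneg (hf j) ENNReal.toReal_nonneg
  calc rval P c D f i u₀ ≤ E i * ∑ j ∈ D, f j * (P i u₀ j).toReal :=
        mul_le_mul_of_nonneg_right ((hE i).2 u₀ hu₀) h2
  _ ≤ E i * 1 := mul_le_mul_of_nonneg_left h1 (le_trans (by norm_num) (hE i).1)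
  _ = E i := mul_one _

end gopBasic

/-! ### The simplex over `D` and the perturbed eigenproblem -/

/-- The probability simplex of functions supported on `D`. -/
def simplexD (D : Finset ℕ) : Set (ℕ → ℝ) :=
  {f | (∀ j, 0 ≤ f j) ∧ (∀ j ∉ D, f j = 0) ∧ ∑ j ∈ D, f j = 1}

lemma isClosed_simplexD : IsClosed (simplexD D) := by
  have h1 : IsClosed {f : ℕ → ℝ | ∀ j, 0 ≤ f j} := by
    have he : {f : ℕ → ℝ | ∀ j, 0 ≤ f j} = ⋂ j, {f : ℕ → ℝ | 0 ≤ f j} := by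
      ext; simp [Set.mem_iInter]
    rw [he]
    exact isClosed_iInter fun j => isClosed_le continuous_const (continuous_apply j)
  have h2 : IsClosed {f : ℕ → ℝ | ∀ j ∉ D, f j = 0} := by
    have he : {f : ℕ → ℝ | ∀ j ∉ D, f j = 0}
        = ⋂ j, ⋂ (_ : j ∉ D), {f : ℕ → ℝ | f j = 0} := by
      ext; simp [Set.mem_iInter]
    rw [he]
    exact isClosed_iInter fun j => isClosed_iInter fun _ =>
      isClosed_eq (continuous_apply j) continuous_const
  have h3 : IsClosed {f : ℕ → ℝ | ∑ j ∈ D, f j = 1} :=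
    isClosed_eq (continuous_finset_sum _ fun j _ => continuous_apply j) continuous_const
  have he : simplexD D = {f : ℕ → ℝ | ∀ j, 0 ≤ f j} ∩
      ({f : ℕ → ℝ | ∀ j ∉ D, f j = 0} ∩ {f : ℕ → ℝ | ∑ j ∈ D, f j = 1}) := by
    ext f
    simp only [simplexD, Set.mem_setOf_eq, Set.mem_inter_iff]
  rw [he]
  exact h1.inter (h2.inter h3)

lemma isCompact_simplexD : IsCompact (simplexD D) := by
  refine IsCompact.of_isClosed_subset
    (isCompact_univ_pi fun _ : ℕ => isCompact_Icc (a := (0:ℝ)) (b := 1))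
    isClosed_simplexD ?_
  rintro f ⟨h0, hD0, hsum⟩
  rw [Set.mem_univ_pi]
  intro j
  refine ⟨h0 j, ?_⟩
  by_cases hj : j ∈ D
  · calc f j ≤ ∑ k ∈ D, f k := Finset.single_le_sum (fun k _ => h0 k) hj
    _ = 1 := hsum
  · rw [hD0 j hj]; norm_num

lemma eps_eigen (hM : Model P c 𝕌) (hD : D.Nonempty)
    {E : ℕ → ℝ} (hE : ∀ i, 1 ≤ E i ∧ ∀ u ∈ 𝕌 i, Real.exp (c i u) ≤ E i)
    {ε : ℝ} (hε0 : 0 < ε) (hε1 : ε ≤ 1) :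
    ∃ lam : ℝ, ∃ f : ℕ → ℝ, 0 ≤ lam ∧ lam ≤ D.card * (D.sup' hD E + 1) ∧ f ∈ simplexD D ∧
      ∀ i ∈ D, lam * f i = gop P c 𝕌 D f i + ε * ∑ j ∈ D, f j := by
  set M : ℝ := (D.card : ℝ) * (D.sup' hD E + 1) with hMdef
  have hcardpos : (0:ℝ) < D.card := by exact_mod_cast Finset.card_pos.2 hD
  have hsup1 : 1 ≤ D.sup' hD E := by
    obtain ⟨j0, hj0⟩ := hD
    exact le_trans (hE j0).1 (Finset.le_sup' E hj0)
  have hMpos : 0 < M := by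
    rw [hMdef]; nlinarith
  -- automatic upper bound for feasible eigenvalues
  have hMbound : ∀ lam : ℝ, ∀ f ∈ simplexD D, 0 ≤ lam →
      (∀ i ∈ D, lam * f i ≤ gop P c 𝕌 D f i + ε * ∑ j ∈ D, f j) → lam ≤ M := by
    intro lam f hf hlam hle
    obtain ⟨j, hjD, hjge⟩ : ∃ j ∈ D, (D.card : ℝ)⁻¹ ≤ f j := by
      by_contra hcon
      push_neg at hcon
      have hlt : ∑ j ∈ D, f j < ∑ _j ∈ D, (D.card : ℝ)⁻¹ :=
        Finset.sum_lt_sum_of_nonempty hD fun j hj => hcon j hj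
      rw [hf.2.2, Finset.sum_const, nsmul_eq_mul, mul_inv_cancel₀ (ne_of_gt hcardpos)] at hlt
      exact lt_irrefl _ hlt
    have h1 : lam * (D.card : ℝ)⁻¹ ≤ gop P c 𝕌 D f j + ε * ∑ k ∈ D, f k :=
      le_trans (mul_le_mul_of_nonneg_left hjge hlam) (hle j hjD)
    have h2 : gop P c 𝕌 D f j + ε * ∑ k ∈ D, f k ≤ D.sup' hD E + 1 := by
      have hg := gop_le_E (D := D) hE hM hf.1 hf.2.2 j
      have hEj : E j ≤ D.sup' hD E := Finset.le_sup' E hjD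
      rw [hf.2.2]
      linarith
    have h3 := mul_le_mul_of_nonneg_left (le_trans h1 h2) (le_of_lt hcardpos)
    calc lam = (D.card : ℝ) * (lam * (D.card:ℝ)⁻¹) := by field_simp
    _ ≤ M := by rw [hMdef]; exact h3
  -- the feasible set
  set S : Set (ℝ × (ℕ → ℝ)) := {p | p.1 ∈ Set.Icc 0 M ∧ p.2 ∈ simplexD D ∧
    ∀ i ∈ D, p.1 * p.2 i ≤ gop P c 𝕌 D p.2 i + ε * ∑ j ∈ D, p.2 j} with hSdef
  have hScompact : IsCompact S := by
    have hclosed : IsClosed {p : ℝ × (ℕ → ℝ) |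
        ∀ i ∈ D, p.1 * p.2 i ≤ gop P c 𝕌 D p.2 i + ε * ∑ j ∈ D, p.2 j} := by
      have he : {p : ℝ × (ℕ → ℝ) |
          ∀ i ∈ D, p.1 * p.2 i ≤ gop P c 𝕌 D p.2 i + ε * ∑ j ∈ D, p.2 j}
          = ⋂ i, ⋂ (_ : i ∈ D), {p : ℝ × (ℕ → ℝ) |
            p.1 * p.2 i ≤ gop P c 𝕌 D p.2 i + ε * ∑ j ∈ D, p.2 j} := by
        ext; simp [Set.mem_iInter]
      rw [he]
      refine isClosed_iInter fun i => isClosed_iInter fun _ => isClosed_le ?_ ?_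
      · exact continuous_fst.mul ((continuous_apply i).comp continuous_snd)
      · exact ((gop_continuous (D := D) hE hM i).comp continuous_snd).add
          (continuous_const.mul ((continuous_finset_sum _ fun j _ => continuous_apply j).comp
            continuous_snd))
    refine IsCompact.of_isClosed_subset
      ((isCompact_Icc (a := (0:ℝ)) (b := M)).prod (isCompact_simplexD (D := D))) ?_ ?_
    · have he : S = ({p : ℝ × (ℕ → ℝ) | p.1 ∈ Set.Icc 0 M} ∩
          {p : ℝ × (ℕ → ℝ) | p.2 ∈ simplexD D}) ∩ {p : ℝ × (ℕ → ℝ) |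
          ∀ i ∈ D, p.1 * p.2 i ≤ gop P c 𝕌 D p.2 i + ε * ∑ j ∈ D, p.2 j} := by
        ext p
        simp only [hSdef, Set.mem_setOf_eq, Set.mem_inter_iff]
        tauto
      rw [he]
      exact ((isClosed_Icc.preimage continuous_fst).inter
        (isClosed_simplexD.preimage continuous_snd)).inter hclosed
    · rintro ⟨lam, f⟩ ⟨h1, h2, _⟩
      exact ⟨h1, h2⟩
  -- nonemptiness
  have hf₀ : (fun j => if j ∈ D then (D.card : ℝ)⁻¹ else 0) ∈ simplexD D := by
    refine ⟨fun j => ?_, fun j hj => if_neg hj, ?_⟩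
    · dsimp only; split
      · positivity
      · exact le_refl 0
    · rw [Finset.sum_congr rfl fun j hj => if_pos hj, Finset.sum_const, nsmul_eq_mul,
        mul_inv_cancel₀ (ne_of_gt hcardpos)]
  have hSne : S.Nonempty := by
    refine ⟨(0, fun j => if j ∈ D then (D.card : ℝ)⁻¹ else 0),
      ⟨le_refl 0, hMpos.le⟩, hf₀, fun i _ => ?_⟩
    dsimp only
    rw [zero_mul]
    have hg := gop_nonneg (D := D) hM hf₀.1 i
    have hs : (0:ℝ) ≤ ∑ j ∈ D, (if j ∈ D then (D.card : ℝ)⁻¹ else 0) :=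
      Finset.sum_nonneg fun j _ => hf₀.1 j
    nlinarith
  -- maximize the eigenvalue over S
  obtain ⟨⟨lam, f⟩, hpS, hmax⟩ := hScompact.exists_isMaxOn hSne continuous_fst.continuousOn
  obtain ⟨hlamIcc, hfΔ, hle⟩ := hpS
  dsimp only at hlamIcc hfΔ hle
  refine ⟨lam, f, hlamIcc.1, hlamIcc.2, hfΔ, ?_⟩
  by_contra hcon
  push_neg at hcon
  obtain ⟨i₀, hi₀D, hi₀ne⟩ := hcon
  have hstrict : lam * f i₀ < gop P c 𝕌 D f i₀ + ε * ∑ j ∈ D, f j :=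
    lt_of_le_of_ne (hle i₀ hi₀D) hi₀ne
  set h : ℕ → ℝ := fun j => if j ∈ D then gop P c 𝕌 D f j + ε * ∑ k ∈ D, f k else 0 with hhdef
  have hsumf : ∑ j ∈ D, f j = 1 := hfΔ.2.2
  have hsumfnn : (0:ℝ) ≤ ∑ k ∈ D, f k := Finset.sum_nonneg fun k _ => hfΔ.1 k
  have hTnonneg : ∀ j, 0 ≤ gop P c 𝕌 D f j + ε * ∑ k ∈ D, f k := fun j => by
    have := gop_nonneg (D := D) hM hfΔ.1 j
    nlinarith
  have hhnonneg : ∀ j, 0 ≤ h j := fun j => by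
    rw [hhdef]; dsimp only; split
    · exact hTnonneg j
    · exact le_refl 0
  have hlamfh : ∀ j ∈ D, lam * f j ≤ h j := fun j hj => by
    rw [hhdef]; dsimp only; rw [if_pos hj]; exact hle j hj
  have hlam0 : 0 ≤ lam := hlamIcc.1
  have hσgt : lam < ∑ j ∈ D, h j := by
    calc lam = ∑ j ∈ D, lam * f j := by rw [← Finset.mul_sum, hsumf, mul_one]
    _ < ∑ j ∈ D, h j := by
        refine Finset.sum_lt_sum hlamfh ⟨i₀, hi₀D, ?_⟩
        rw [hhdef]; dsimp only; rw [if_pos hi₀D]; exact hstrict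
  have hσpos : 0 < ∑ j ∈ D, h j := lt_of_le_of_lt hlam0 hσgt
  set σ : ℝ := ∑ j ∈ D, h j with hσdef
  -- strict inequality for `h` on `D`
  have hkey : ∀ i ∈ D, lam * h i < gop P c 𝕌 D h i + ε * σ := by
    intro i hi
    have h1 : gop P c 𝕌 D (fun j => lam * f j) i ≤ gop P c 𝕌 D h i :=
      gop_mono (D := D) hE hM (fun j hj => hlamfh j hj) i
    have h2 : gop P c 𝕌 D (fun j => lam * f j) i = lam * gop P c 𝕌 D f i :=
      gop_smul (D := D) hM hlam0 f i
    have h3 : ε * lam < ε * σ := mul_lt_mul_of_pos_left hσgt hε0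
    have h4 : h i = gop P c 𝕌 D f i + ε * ∑ k ∈ D, f k := by
      rw [hhdef]; dsimp only; rw [if_pos hi]
    rw [h4, hsumf]
    have h5 : lam * (gop P c 𝕌 D f i + ε * 1) = lam * gop P c 𝕌 D f i + ε * lam := by ring
    rw [h5]
    linarith
  -- normalize `h`
  set f' : ℕ → ℝ := fun j => σ⁻¹ * h j with hf'def
  have hσinv : 0 < σ⁻¹ := inv_pos.2 hσpos
  have hf'sum : ∑ j ∈ D, f' j = 1 := by
    rw [hf'def]
    rw [← Finset.mul_sum, ← hσdef, inv_mul_cancel₀ (ne_of_gt hσpos)]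
  have hf'Δ : f' ∈ simplexD D := by
    refine ⟨fun j => mul_nonneg hσinv.le (hhnonneg j), fun j hj => ?_, hf'sum⟩
    rw [hf'def]; dsimp only; rw [hhdef]; dsimp only; rw [if_neg hj, mul_zero]
  have hkey' : ∀ i ∈ D, lam * f' i < gop P c 𝕌 D f' i + ε * ∑ j ∈ D, f' j := by
    intro i hi
    have h5 : gop P c 𝕌 D f' i = σ⁻¹ * gop P c 𝕌 D h i :=
      gop_smul (D := D) hM hσinv.le h i
    have h6 := mul_lt_mul_of_pos_left (hkey i hi) hσinv
    rw [hf'sum, h5]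
    have h7 : σ⁻¹ * (gop P c 𝕌 D h i + ε * σ) = σ⁻¹ * gop P c 𝕌 D h i + ε * (σ⁻¹ * σ) := by
      ring
    rw [h7, inv_mul_cancel₀ (ne_of_gt hσpos), mul_one] at h6
    have h8 : σ⁻¹ * (lam * h i) = lam * f' i := by rw [hf'def]; ring
    rw [h8] at h6
    linarith
  -- bump the eigenvalue
  set δ : ℝ := D.inf' hD (fun i => gop P c 𝕌 D f' i + ε * ∑ j ∈ D, f' j - lam * f' i)
    with hδdef
  have hδpos : 0 < δ := by
    rw [hδdef, Finset.lt_inf'_iff]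
    intro i hi
    have := hkey' i hi
    linarith
  have hf'le1 : ∀ i ∈ D, f' i ≤ 1 := fun i hi => by
    calc f' i ≤ ∑ j ∈ D, f' j := Finset.single_le_sum (fun j _ => hf'Δ.1 j) hi
    _ = 1 := hf'sum
  have hnew : ∀ i ∈ D, (lam + δ) * f' i ≤ gop P c 𝕌 D f' i + ε * ∑ j ∈ D, f' j := by
    intro i hi
    have h8 : δ * f' i ≤ δ := by
      calc δ * f' i ≤ δ * 1 := mul_le_mul_of_nonneg_left (hf'le1 i hi) hδpos.le
      _ = δ := mul_one _
    have h9 : δ ≤ gop P c 𝕌 D f' i + ε * ∑ j ∈ D, f' j - lam * f' i := by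
      rw [hδdef]
      exact Finset.inf'_le _ hi
    have h10 : (lam + δ) * f' i = lam * f' i + δ * f' i := by ring
    linarith
  have hnew0 : (0:ℝ) ≤ lam + δ := by linarith
  have hnewM : lam + δ ≤ M := hMbound (lam + δ) f' hf'Δ hnew0 hnew
  have hnewmem : ((lam + δ, f') : ℝ × (ℕ → ℝ)) ∈ S := ⟨⟨hnew0, hnewM⟩, hf'Δ, hnew⟩
  have hcontra : lam + δ ≤ lam := hmax hnewmem
  linarith


lemma exists_eigen (hM : Model P c 𝕌) (hA1a : A1a P c 𝕌) (hD : D.Nonempty) :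
    ∃ lam : ℝ, ∃ f : ℕ → ℝ, 0 ≤ lam ∧ f ∈ simplexD D ∧
      ∀ i ∈ D, lam * f i = gop P c 𝕌 D f i := by
  obtain ⟨E, hE⟩ := exists_expBound hM hA1a
  set M : ℝ := (D.card : ℝ) * (D.sup' hD E + 1) with hMdef
  have hexists : ∀ n : ℕ, ∃ p : ℝ × (ℕ → ℝ), (0 ≤ p.1 ∧ p.1 ≤ M) ∧ p.2 ∈ simplexD D ∧
      ∀ i ∈ D, p.1 * p.2 i = gop P c 𝕌 D p.2 i + ((n:ℝ) + 1)⁻¹ * ∑ j ∈ D, p.2 j := by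
    intro n
    have hε0 : (0:ℝ) < ((n:ℝ) + 1)⁻¹ := by positivity
    have hε1 : ((n:ℝ) + 1)⁻¹ ≤ 1 := by
      rw [inv_le_one_iff₀]
      right
      simp [Nat.cast_nonneg]
    obtain ⟨lam, f, h0, hM', hΔ, heq⟩ := eps_eigen hM hD hE hε0 hε1
    exact ⟨(lam, f), ⟨h0, hM'⟩, hΔ, heq⟩
  choose p hp using hexists
  have hcompact : IsCompact (Set.Icc (0:ℝ) M ×ˢ simplexD D) :=
    isCompact_Icc.prod isCompact_simplexD
  have hmem : ∀ n, p n ∈ Set.Icc (0:ℝ) M ×ˢ simplexD D := fun n =>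
    ⟨⟨(hp n).1.1, (hp n).1.2⟩, (hp n).2.1⟩
  obtain ⟨⟨lam, f⟩, hlim_mem, φ, hφmono, hφtend⟩ := hcompact.tendsto_subseq hmem
  refine ⟨lam, f, hlim_mem.1.1, hlim_mem.2, fun i hi => ?_⟩
  have htend1 : Filter.Tendsto (fun n => (p (φ n)).1) Filter.atTop (𝓝 lam) := by
    have := (continuous_fst.tendsto ((lam, f) : ℝ × (ℕ → ℝ))).comp hφtend
    exact this
  have htendf : Filter.Tendsto (fun n => (p (φ n)).2) Filter.atTop (𝓝 f) := by
    have := (continuous_snd.tendsto ((lam, f) : ℝ × (ℕ → ℝ))).comp hφtend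
    exact this
  have htendfi : Filter.Tendsto (fun n => (p (φ n)).2 i) Filter.atTop (𝓝 (f i)) :=
    ((continuous_apply i).tendsto f).comp htendf
  have htendg : Filter.Tendsto (fun n => gop P c 𝕌 D ((p (φ n)).2) i) Filter.atTop
      (𝓝 (gop P c 𝕌 D f i)) :=
    ((gop_continuous (D := D) hE hM i).tendsto f).comp htendf
  have htends : Filter.Tendsto (fun n => ∑ j ∈ D, (p (φ n)).2 j) Filter.atTop
      (𝓝 (∑ j ∈ D, f j)) :=
    ((continuous_finset_sum _ fun j _ => continuous_apply j).tendsto f).comp htendf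
  have htendε : Filter.Tendsto (fun n => ((φ n : ℝ) + 1)⁻¹) Filter.atTop (𝓝 0) := by
    have h1 : Filter.Tendsto (fun n : ℕ => ((n : ℝ) + 1)⁻¹) Filter.atTop (𝓝 0) := by
      have := tendsto_one_div_add_atTop_nhds_zero_nat (𝕜 := ℝ)
      simpa [one_div] using this
    exact h1.comp hφmono.tendsto_atTop
  have hL : Filter.Tendsto (fun n => (p (φ n)).1 * (p (φ n)).2 i) Filter.atTop
      (𝓝 (lam * f i)) := htend1.mul htendfi
  have hR : Filter.Tendsto
      (fun n => gop P c 𝕌 D ((p (φ n)).2) i + ((φ n : ℝ) + 1)⁻¹ * ∑ j ∈ D, (p (φ n)).2 j)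
      Filter.atTop (𝓝 (gop P c 𝕌 D f i + 0 * ∑ j ∈ D, f j)) :=
    htendg.add (htendε.mul htends)
  have heqn : ∀ n, (p (φ n)).1 * (p (φ n)).2 i
      = gop P c 𝕌 D ((p (φ n)).2) i + ((φ n : ℝ) + 1)⁻¹ * ∑ j ∈ D, (p (φ n)).2 j := fun n =>
    (hp (φ n)).2.2 i hi
  have := tendsto_nhds_unique (hL.congr heqn) hR
  rw [this, zero_mul, add_zero]

/-! ### Bridging the real operator and `minOp` -/

lemma PtoReal_contOn (hA1a : A1a P c 𝕌) (i j : ℕ) :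
    ContinuousOn (fun u => (P i u j).toReal) (𝕌 i) := by
  have h := hA1a.PCont i (fun k => if k = j then 1 else 0)
    ⟨1, by intro k; split <;> simp⟩
  refine h.congr fun u _ => ?_
  beta_reduce
  rw [tsum_eq_single j ?_]
  · rw [if_pos rfl, one_mul]
  · intro k hk
    rw [if_neg hk, zero_mul]

lemma rval_contOn (hA1a : A1a P c 𝕌) (f : ℕ → ℝ) (i : ℕ) :
    ContinuousOn (fun u => rval P c D f i u) (𝕌 i) := by
  refine ContinuousOn.mul ?_ ?_
  · exact Real.continuous_exp.comp_continuousOn (hA1a.cCont i)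
  · exact continuousOn_finset_sum _ fun j _ => continuousOn_const.mul (PtoReal_contOn hA1a i j)

set_option maxHeartbeats 1000000 in
lemma minOp_eq_ofReal_gop (hM : Model P c 𝕌) (hA1a : A1a P c 𝕌) {f : ℕ → ℝ}
    (hf0 : ∀ j, 0 ≤ f j) (hfD : ∀ j ∉ D, f j = 0) (i : ℕ) :
    minOp P c 𝕌 (fun j => ENNReal.ofReal (f j)) i = ENNReal.ofReal (gop P c 𝕌 D f i) := by
  obtain ⟨E, hE⟩ := exists_expBound hM hA1a
  have hNE : Nonempty (𝕌 i) := (hM.nonempty i).to_subtype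
  have hpt : ∀ u : 𝕌 i, ENNReal.ofReal (Real.exp (c i u.1)) *
      ∑' j, ENNReal.ofReal (f j) * P i u.1 j = ENNReal.ofReal (rval P c D f i u.1) := by
    intro u
    have hts : ∑' j, ENNReal.ofReal (f j) * P i u.1 j
        = ∑ j ∈ D, ENNReal.ofReal (f j) * P i u.1 j := by
      refine tsum_eq_sum fun j hj => ?_
      rw [hfD j hj, ENNReal.ofReal_zero, zero_mul]
    have hsum : ∑ j ∈ D, ENNReal.ofReal (f j) * P i u.1 j
        = ENNReal.ofReal (∑ j ∈ D, f j * (P i u.1 j).toReal) := by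
      rw [ENNReal.ofReal_sum_of_nonneg fun j _ => mul_nonneg (hf0 j) ENNReal.toReal_nonneg]
      refine Finset.sum_congr rfl fun j _ => ?_
      rw [ENNReal.ofReal_mul (hf0 j), ENNReal.ofReal_toReal]
      exact ne_of_lt (lt_of_le_of_lt (P_le_one hM u.2 j) (by norm_num))
    rw [hts, hsum, ← ENNReal.ofReal_mul (Real.exp_pos _).le, rval]
  have hstep : minOp P c 𝕌 (fun j => ENNReal.ofReal (f j)) i
      = ⨅ u : 𝕌 i, ENNReal.ofReal (rval P c D f i u.1) := by
    rw [minOp]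
    exact iInf_congr hpt
  obtain ⟨u₀, hu₀, hmin⟩ := (hM.compact i).exists_isMinOn (hM.nonempty i)
    (rval_contOn (D := D) hA1a f i)
  have hgop : gop P c 𝕌 D f i = rval P c D f i u₀ := by
    refine le_antisymm (ciInf_le (rval_bddBelow (D := D) hE hM f i) ⟨u₀, hu₀⟩)
      (le_ciInf fun u => hmin u.2)
  have hEN : (⨅ u : 𝕌 i, ENNReal.ofReal (rval P c D f i u.1))
      = ENNReal.ofReal (rval P c D f i u₀) := by
    refine le_antisymm ?_ (le_iInf fun u => ENNReal.ofReal_le_ofReal (hmin u.2))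
    exact iInf_le (fun u : 𝕌 i => ENNReal.ofReal (rval P c D f i u.1)) ⟨u₀, hu₀⟩
  rw [hstep, hEN, hgop]

/-- Part A: existence of the Dirichlet eigenpair, with the one-step sub-invariance
inequality needed for the dynamic part. -/
lemma exists_eigenpair (hM : Model P c 𝕌) (hA1a : A1a P c 𝕌) (hD : D.Nonempty) :
    ∃ lam : ℝ, ∃ ψ : ℕ → ℝ≥0∞, 0 ≤ lam ∧ (∃ i, ψ i ≠ 0) ∧ (∀ i, ψ i ≠ ∞) ∧
      (∀ i ∉ D, ψ i = 0) ∧ (∀ i ∈ D, ENNReal.ofReal lam * ψ i = minOp P c 𝕌 ψ i) ∧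
      (∀ i, ∀ u ∈ 𝕌 i, ENNReal.ofReal lam * ψ i ≤
        ENNReal.ofReal (Real.exp (c i u)) * ∑' j, ψ j * P i u j) := by
  obtain ⟨lam, f, hlam0, hfΔ, heig⟩ := exists_eigen hM hA1a hD
  have heig' : ∀ i ∈ D, ENNReal.ofReal lam * ENNReal.ofReal (f i)
      = minOp P c 𝕌 (fun j => ENNReal.ofReal (f j)) i := by
    intro i hi
    rw [minOp_eq_ofReal_gop hM hA1a hfΔ.1 hfΔ.2.1 i, ← heig i hi, ENNReal.ofReal_mul hlam0]
  refine ⟨lam, fun j => ENNReal.ofReal (f j), hlam0, ?_, fun i => ENNReal.ofReal_ne_top,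
    fun i hi => by dsimp only; rw [hfΔ.2.1 i hi, ENNReal.ofReal_zero], heig', ?_⟩
  · obtain ⟨j, hjD, hj⟩ : ∃ j ∈ D, 0 < f j := by
      by_contra hcon
      push_neg at hcon
      have hz : ∑ j ∈ D, f j = 0 :=
        Finset.sum_eq_zero fun j hj => le_antisymm (hcon j hj) (hfΔ.1 j)
      rw [hfΔ.2.2] at hz
      norm_num at hz
    exact ⟨j, ne_of_gt (ENNReal.ofReal_pos.2 hj)⟩
  · intro i u hu
    by_cases hi : i ∈ D
    · rw [heig' i hi]
      exact iInf_le (fun u : 𝕌 i => ENNReal.ofReal (Real.exp (c i u.1)) *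
        ∑' j, ENNReal.ofReal (f j) * P i u.1 j) ⟨u, hu⟩
    · dsimp only
      rw [hfΔ.2.1 i hi, ENNReal.ofReal_zero, mul_zero]
      exact zero_le

/-! ### The dynamic part -/

omit [TopologicalSpace U] [MeasurableSpace U] in
lemma act_congr {ζ : ∀ t : ℕ, (Fin (t + 1) → ℕ) → U} {x x' : ℕ → ℕ} {t : ℕ}
    (h : ∀ s, s ≤ t → x s = x' s) : act ζ x t = act ζ x' t := by
  unfold act
  congr 1
  funext s
  exact h s.val (Nat.lt_succ_iff.mp s.isLt)

lemma extN_snoc_of_le {T : ℕ} (y : Fin (T + 1) → ℕ) (j : ℕ) {n : ℕ} (hn : n ≤ T) :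
    extN (T + 1) (Fin.snoc y j) n = extN T y n := by
  unfold extN
  have hlt : min n (T + 1) < T + 1 := by omega
  have h1 : (⟨min n (T + 1), Nat.lt_succ_of_le (min_le_right n (T + 1))⟩ : Fin (T + 2))
      = Fin.castSucc ⟨min n (T + 1), hlt⟩ := by
    apply Fin.ext
    simp
  rw [h1, Fin.snoc_castSucc]
  congr 1
  apply Fin.ext
  simp
  omega

lemma extN_snoc_last {T : ℕ} (y : Fin (T + 1) → ℕ) (j : ℕ) :
    extN (T + 1) (Fin.snoc y j) (T + 1) = j := by
  unfold extN
  have h1 : (⟨min (T + 1) (T + 1), Nat.lt_succ_of_le (min_le_right (T + 1) (T + 1))⟩ :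
      Fin (T + 2)) = Fin.last (T + 1) := by
    apply Fin.ext
    simp [Fin.last]
  rw [h1, Fin.snoc_last]

omit [TopologicalSpace U] [MeasurableSpace U] in
lemma costSum_snoc {ζ : ∀ t : ℕ, (Fin (t + 1) → ℕ) → U} (T : ℕ)
    (y : Fin (T + 1) → ℕ) (j : ℕ) :
    ∑ t ∈ Finset.range (T + 1),
        c (extN (T + 1) (Fin.snoc y j) t) (act ζ (extN (T + 1) (Fin.snoc y j)) t)
      = (∑ t ∈ Finset.range T, c (extN T y t) (act ζ (extN T y) t))
        + c (extN T y T) (act ζ (extN T y) T) := by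
  have hzw : ∀ n, n ≤ T → extN (T + 1) (Fin.snoc y j) n = extN T y n := fun n hn =>
    extN_snoc_of_le y j hn
  have hact : ∀ t, t ≤ T → act ζ (extN (T + 1) (Fin.snoc y j)) t = act ζ (extN T y) t :=
    fun t ht => act_congr fun s hs => hzw s (le_trans hs ht)
  rw [Finset.sum_range_succ, hzw T le_rfl, hact T le_rfl]
  congr 1
  refine Finset.sum_congr rfl fun t ht => ?_
  have ht' : t < T := Finset.mem_range.mp ht
  rw [hzw t ht'.le, hact t ht'.le]

omit [TopologicalSpace U] [MeasurableSpace U] in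
lemma pathWeight_snoc {ζ : ∀ t : ℕ, (Fin (t + 1) → ℕ) → U} (i T : ℕ)
    (y : Fin (T + 1) → ℕ) (j : ℕ) :
    pathWeight P ζ i (T + 1) (extN (T + 1) (Fin.snoc y j))
      = pathWeight P ζ i T (extN T y) * P (extN T y T) (act ζ (extN T y) T) j := by
  have hzw : ∀ n, n ≤ T → extN (T + 1) (Fin.snoc y j) n = extN T y n := fun n hn =>
    extN_snoc_of_le y j hn
  have hact : ∀ t, t ≤ T → act ζ (extN (T + 1) (Fin.snoc y j)) t = act ζ (extN T y) t :=
    fun t ht => act_congr fun s hs => hzw s (le_trans hs ht)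
  unfold pathWeight
  rw [Finset.prod_range_succ]
  have hprod : ∏ t ∈ Finset.range T, P (extN (T + 1) (Fin.snoc y j) t)
      (act ζ (extN (T + 1) (Fin.snoc y j)) t) (extN (T + 1) (Fin.snoc y j) (t + 1))
      = ∏ t ∈ Finset.range T, P (extN T y t) (act ζ (extN T y) t) (extN T y (t + 1)) := by
    refine Finset.prod_congr rfl fun t ht => ?_
    have ht' : t < T := Finset.mem_range.mp ht
    rw [hzw t ht'.le, hzw (t + 1) ht', hact t ht'.le]
  rw [hprod, hzw 0 (Nat.zero_le T), hzw T le_rfl, hact T le_rfl, extN_snoc_last y j,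
    mul_assoc]

section Dyn

variable {Λ : ℝ≥0∞} {ψ : ℕ → ℝ≥0∞}

lemma key_le
    (hpt : ∀ i', ∀ u ∈ 𝕌 i', Λ * ψ i' ≤
      ENNReal.ofReal (Real.exp (c i' u)) * ∑' j, ψ j * P i' u j)
    {ζ : ∀ t : ℕ, (Fin (t + 1) → ℕ) → U} (hζ : IsAdmissible 𝕌 ζ) (i : ℕ) :
    ∀ T : ℕ, Λ ^ T * ψ i ≤ pathExp P ζ i T (fun x =>
      ENNReal.ofReal (Real.exp (∑ t ∈ Finset.range T, c (x t) (act ζ x t))) * ψ (x T)) := by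
  intro T
  induction T with
  | zero =>
    rw [pow_zero, one_mul, pathExp,
      ← Equiv.tsum_eq ((Equiv.funUnique (Fin 1) ℕ).symm)]
    have hterm : ∀ n : ℕ,
        pathWeight P ζ i 0 (extN 0 ((Equiv.funUnique (Fin 1) ℕ).symm n)) *
          ((fun x => ENNReal.ofReal
            (Real.exp (∑ t ∈ Finset.range 0, c (x t) (act ζ x t))) * ψ (x 0))
            (extN 0 ((Equiv.funUnique (Fin 1) ℕ).symm n)))
        = if n = i then ψ n else 0 := by
      intro n
      have hx : ∀ m, extN 0 ((Equiv.funUnique (Fin 1) ℕ).symm n) m = n := fun m => rfl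
      simp only [pathWeight, Finset.prod_range_zero, Finset.sum_range_zero, Real.exp_zero,
        ENNReal.ofReal_one, one_mul, mul_one, hx]
      split <;> simp
    rw [tsum_congr hterm, tsum_eq_single i (fun n hn => by rw [if_neg hn])]
    rw [if_pos rfl]
  | succ T ih =>
    set F' := fun x : ℕ → ℕ => ENNReal.ofReal
      (Real.exp (∑ t ∈ Finset.range (T + 1), c (x t) (act ζ x t))) * ψ (x (T + 1)) with hF'
    have hsucc : pathExp P ζ i (T + 1) F'
        = ∑' (y : Fin (T + 1) → ℕ) (j : ℕ),
            pathWeight P ζ i (T + 1) (extN (T + 1) (Fin.snoc y j)) *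
              F' (extN (T + 1) (Fin.snoc y j)) := by
      rw [pathExp, ← Equiv.tsum_eq (Fin.snocEquiv (fun _ : Fin (T + 2) => ℕ)),
        ENNReal.tsum_prod', ENNReal.tsum_comm]
      rfl
    have hinner : ∀ y : Fin (T + 1) → ℕ,
        Λ * (pathWeight P ζ i T (extN T y) *
          (ENNReal.ofReal (Real.exp (∑ t ∈ Finset.range T,
            c (extN T y t) (act ζ (extN T y) t))) * ψ (extN T y T)))
        ≤ ∑' j : ℕ, pathWeight P ζ i (T + 1) (extN (T + 1) (Fin.snoc y j)) *
            F' (extN (T + 1) (Fin.snoc y j)) := by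
      intro y
      have hterm : ∀ j : ℕ,
          pathWeight P ζ i (T + 1) (extN (T + 1) (Fin.snoc y j)) *
            F' (extN (T + 1) (Fin.snoc y j))
          = (pathWeight P ζ i T (extN T y) *
              ENNReal.ofReal (Real.exp (∑ t ∈ Finset.range T,
                c (extN T y t) (act ζ (extN T y) t)))) *
            (ENNReal.ofReal (Real.exp (c (extN T y T) (act ζ (extN T y) T))) *
              (ψ j * P (extN T y T) (act ζ (extN T y) T) j)) := by
        intro j
        have h1 := pathWeight_snoc (P := P) (ζ := ζ) i T y j
        have h2 : F' (extN (T + 1) (Fin.snoc y j))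
            = ENNReal.ofReal (Real.exp (∑ t ∈ Finset.range T,
                c (extN T y t) (act ζ (extN T y) t))) *
              (ENNReal.ofReal (Real.exp (c (extN T y T) (act ζ (extN T y) T))) * ψ j) := by
          rw [hF']
          dsimp only
          rw [costSum_snoc (c := c) T y j, extN_snoc_last y j, Real.exp_add,
            ENNReal.ofReal_mul (Real.exp_pos _).le, mul_assoc]
        rw [h1, h2]
        ring
      rw [tsum_congr hterm, ENNReal.tsum_mul_left, ENNReal.tsum_mul_left]
      have hadm : act ζ (extN T y) T ∈ 𝕌 (extN T y T) := hζ T fun s => extN T y s.val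
      have hstep := hpt (extN T y T) (act ζ (extN T y) T) hadm
      calc Λ * (pathWeight P ζ i T (extN T y) *
          (ENNReal.ofReal (Real.exp (∑ t ∈ Finset.range T,
            c (extN T y t) (act ζ (extN T y) t))) * ψ (extN T y T)))
          = (pathWeight P ζ i T (extN T y) *
              ENNReal.ofReal (Real.exp (∑ t ∈ Finset.range T,
                c (extN T y t) (act ζ (extN T y) t)))) * (Λ * ψ (extN T y T)) := by ring
        _ ≤ (pathWeight P ζ i T (extN T y) *
              ENNReal.ofReal (Real.exp (∑ t ∈ Finset.range T,
                c (extN T y t) (act ζ (extN T y) t)))) *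
            (ENNReal.ofReal (Real.exp (c (extN T y T) (act ζ (extN T y) T))) *
              ∑' j, ψ j * P (extN T y T) (act ζ (extN T y) T) j) :=
          mul_le_mul_right hstep _
    calc Λ ^ (T + 1) * ψ i = Λ * (Λ ^ T * ψ i) := by rw [pow_succ]; ring
      _ ≤ Λ * pathExp P ζ i T (fun x => ENNReal.ofReal
          (Real.exp (∑ t ∈ Finset.range T, c (x t) (act ζ x t))) * ψ (x T)) :=
        mul_le_mul_right ih _
      _ = ∑' y : Fin (T + 1) → ℕ, Λ * (pathWeight P ζ i T (extN T y) *
          (ENNReal.ofReal (Real.exp (∑ t ∈ Finset.range T,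
            c (extN T y t) (act ζ (extN T y) t))) * ψ (extN T y T))) := by
        rw [pathExp, ENNReal.tsum_mul_left]
      _ ≤ ∑' (y : Fin (T + 1) → ℕ) (j : ℕ),
            pathWeight P ζ i (T + 1) (extN (T + 1) (Fin.snoc y j)) *
              F' (extN (T + 1) (Fin.snoc y j)) :=
        ENNReal.tsum_le_tsum hinner
      _ = pathExp P ζ i (T + 1) F' := hsucc.symm

lemma key_le_pathExp (hψD : ∀ n ∉ D, ψ n = 0)
    (hpt : ∀ i', ∀ u ∈ 𝕌 i', Λ * ψ i' ≤
      ENNReal.ofReal (Real.exp (c i' u)) * ∑' j, ψ j * P i' u j)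
    {ζ : ∀ t : ℕ, (Fin (t + 1) → ℕ) → U} (hζ : IsAdmissible 𝕌 ζ) (i T : ℕ) :
    Λ ^ T * ψ i ≤ (∑ j ∈ D, ψ j) * pathExp P ζ i T (fun x =>
      ENNReal.ofReal (Real.exp (∑ t ∈ Finset.range T, c (x t) (act ζ x t)))) := by
  refine le_trans (key_le hpt hζ i T) ?_
  rw [pathExp, pathExp, ← ENNReal.tsum_mul_left]
  refine ENNReal.tsum_le_tsum fun x => ?_
  have hb : ψ (extN T x T) ≤ ∑ j ∈ D, ψ j := by
    by_cases hx : extN T x T ∈ D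
    · exact Finset.single_le_sum (fun j _ => zero_le) hx
    · rw [hψD _ hx]
      exact zero_le
  calc pathWeight P ζ i T (extN T x) *
      (ENNReal.ofReal (Real.exp (∑ t ∈ Finset.range T,
        c (extN T x t) (act ζ (extN T x) t))) * ψ (extN T x T))
      ≤ pathWeight P ζ i T (extN T x) *
        (ENNReal.ofReal (Real.exp (∑ t ∈ Finset.range T,
          c (extN T x t) (act ζ (extN T x) t))) * ∑ j ∈ D, ψ j) :=
        mul_le_mul_right (mul_le_mul_right hb _) _
    _ = (∑ j ∈ D, ψ j) * (pathWeight P ζ i T (extN T x) *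
        ENNReal.ofReal (Real.exp (∑ t ∈ Finset.range T,
          c (extN T x t) (act ζ (extN T x) t)))) := by ring

lemma log_le_ergCost (hM : Model P c 𝕌) (hD : D.Nonempty)
    {lam : ℝ} (hlam : 0 < lam)
    (hψfin : ∀ n, ψ n ≠ ∞) (hψD : ∀ n ∉ D, ψ n = 0)
    (hpt : ∀ i', ∀ u ∈ 𝕌 i', ENNReal.ofReal lam * ψ i' ≤
      ENNReal.ofReal (Real.exp (c i' u)) * ∑' j, ψ j * P i' u j)
    {ζ : ∀ t : ℕ, (Fin (t + 1) → ℕ) → U} (hζ : IsAdmissible 𝕌 ζ)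
    {i : ℕ} (hψi : ψ i ≠ 0) :
    (Real.log lam : EReal) ≤ ergCost P c ζ i := by
  set S := ∑ j ∈ D, ψ j with hSdef
  have hSfin : S ≠ ∞ := by
    rw [hSdef]
    exact (ENNReal.sum_lt_top.mpr fun j _ => lt_of_le_of_ne le_top (hψfin j)).ne
  have hiD : i ∈ D := by
    by_contra h
    exact hψi (hψD i h)
  have hS0 : S ≠ 0 := by
    intro h0
    refine hψi (le_antisymm ?_ (zero_le))
    rw [← h0, hSdef]
    exact Finset.single_le_sum (fun j _ => zero_le) hiD
  have hψpos : 0 < (ψ i).toReal := ENNReal.toReal_pos hψi (hψfin i)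
  have hSpos : 0 < S.toReal := ENNReal.toReal_pos hS0 hSfin
  set r := Real.log lam with hrdef
  set pR := Real.log (ψ i).toReal with hpRdef
  set sR := Real.log S.toReal with hsRdef
  have hlog : ∀ T : ℕ, ((T * r + pR - sR : ℝ) : EReal) ≤
      ENNReal.log (pathExp P ζ i T (fun x =>
        ENNReal.ofReal (Real.exp (∑ t ∈ Finset.range T, c (x t) (act ζ x t))))) := by
    intro T
    have h1 := ENNReal.log_monotone
      (key_le_pathExp (D := D) hψD (fun i' u hu => hpt i' u hu) hζ i T)
    rw [ENNReal.log_mul_add, ENNReal.log_mul_add, ENNReal.log_pow] at h1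
    have h2 : ENNReal.log (ENNReal.ofReal lam) = (r : EReal) :=
      ENNReal.log_ofReal_of_pos hlam
    have h3 : ENNReal.log (ψ i) = (pR : EReal) := by
      rw [← ENNReal.ofReal_toReal (hψfin i), ENNReal.log_ofReal_of_pos hψpos]
    have h4 : ENNReal.log S = (sR : EReal) := by
      rw [← ENNReal.ofReal_toReal hSfin, ENNReal.log_ofReal_of_pos hSpos]
    rw [h2, h3, h4] at h1
    have h5 : ((T : ℕ) : EReal) * (r : EReal) + (pR : EReal) = ((T * r + pR : ℝ) : EReal) := by
      rw [← EReal.coe_coe_eq_natCast, ← EReal.coe_mul, ← EReal.coe_add]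
    rw [h5] at h1
    generalize hL : ENNReal.log (pathExp P ζ i T (fun x =>
      ENNReal.ofReal (Real.exp (∑ t ∈ Finset.range T, c (x t) (act ζ x t))))) = L at h1 ⊢
    induction L with
    | bot =>
      exfalso
      rw [EReal.add_bot] at h1
      exact EReal.coe_ne_bot _ (le_bot_iff.mp h1)
    | coe L =>
      rw [← EReal.coe_add] at h1
      rw [EReal.coe_le_coe_iff] at h1 ⊢
      linarith
    | top => exact le_top
  have hev : ∀ᶠ T : ℕ in Filter.atTop,
      ((r + (pR - sR) * (T : ℝ)⁻¹ : ℝ) : EReal) ≤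
        (((T : ℝ)⁻¹ : ℝ) : EReal) * ENNReal.log (pathExp P ζ i T (fun x =>
          ENNReal.ofReal (Real.exp (∑ t ∈ Finset.range T, c (x t) (act ζ x t))))) := by
    filter_upwards [Filter.eventually_ge_atTop 1] with T hT
    have hTpos : (0 : ℝ) < (T : ℝ) := by
      have : (1 : ℕ) ≤ T := hT
      exact_mod_cast lt_of_lt_of_le zero_lt_one (by exact_mod_cast this)
    have hinvnn : (0 : EReal) ≤ (((T : ℝ)⁻¹ : ℝ) : EReal) := by
      rw [← EReal.coe_zero, EReal.coe_le_coe_iff]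
      positivity
    have h6 := mul_le_mul_of_nonneg_left (hlog T) hinvnn
    rw [← EReal.coe_mul] at h6
    have h7 : (T : ℝ)⁻¹ * (T * r + pR - sR) = r + (pR - sR) * (T : ℝ)⁻¹ := by
      field_simp
      ring
    rw [h7] at h6
    exact h6
  have hlimv : Filter.Tendsto (fun T : ℕ => ((r + (pR - sR) * (T : ℝ)⁻¹ : ℝ) : EReal))
      Filter.atTop (𝓝 (r : EReal)) := by
    rw [EReal.tendsto_coe]
    have h8 : Filter.Tendsto (fun T : ℕ => r + (pR - sR) * (T : ℝ)⁻¹) Filter.atTop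
        (𝓝 (r + (pR - sR) * 0)) :=
      tendsto_const_nhds.add (tendsto_const_nhds.mul
        (tendsto_inv_atTop_zero.comp tendsto_natCast_atTop_atTop))
    simpa using h8
  calc (r : EReal)
      = Filter.limsup (fun T : ℕ => ((r + (pR - sR) * (T : ℝ)⁻¹ : ℝ) : EReal))
        Filter.atTop := (hlimv.limsup_eq).symm
    _ ≤ ergCost P c ζ i := Filter.limsup_le_limsup hev

end Dyn

end Aux


/-- Lemma 2.1.  Existence of a Dirichlet eigenpair on a
finite set `D`, whose (logarithmic) eigenvalue bounds the optimal risk-sensitive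
cost from below at every point where the eigenfunction is positive. -/
theorem dirichlet_eigenpair {U : Type*} [TopologicalSpace U] [MeasurableSpace U]
    (P : ℕ → U → ℕ → ℝ≥0∞) (c : ℕ → U → ℝ) (𝕌 : ℕ → Set U)
    (hM : Model P c 𝕌) (hc : ∀ i, ∀ u ∈ 𝕌 i, 0 ≤ c i u) (hA1a : A1a P c 𝕌)
    (D : Finset ℕ) (hD : D.Nonempty) :
    ∃ (lamD : ℝ) (ψ : ℕ → ℝ≥0∞), 0 ≤ lamD ∧
      (∃ i, ψ i ≠ 0) ∧ (∀ i, ψ i ≠ ∞) ∧ (∀ i ∉ D, ψ i = 0) ∧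
      (∀ i ∈ D, ENNReal.ofReal lamD * ψ i = minOp P c 𝕌 ψ i) ∧
      ∀ i, ψ i ≠ 0 →
        ENNReal.log (ENNReal.ofReal lamD) ≤
          ⨅ ζ : {ζ : ∀ t : ℕ, (Fin (t + 1) → ℕ) → U // IsAdmissible 𝕌 ζ},
            ergCost P c ζ.1 i := by
  obtain ⟨lam, ψ, hlam0, hne, hfin, hD0, heig, hpt⟩ := exists_eigenpair hM hA1a hD
  refine ⟨lam, ψ, hlam0, hne, hfin, hD0, heig, ?_⟩
  intro i hψi
  rcases eq_or_lt_of_le hlam0 with hzero | hpos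
  · rw [← hzero, ENNReal.ofReal_zero, ENNReal.log_zero]
    exact bot_le
  · rw [ENNReal.log_ofReal_of_pos hpos]
    exact le_iInf fun ζ => log_le_ergCost (D := D) hM hD hpos hfin hD0 hpt ζ.2 hψi

end RSDT
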